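/- Type A action of Ŝ on tableaux (single-box raising): let g be of type A_n with adapted ι, fix j₁ < ⋯ < j_k in {1,...,n+1} and s ∈ ℤ, and set T = [j₁,...,j_k]^A_s = Σ_{i=1}^k box^A_{j_i}(s+k−i). Suppose i ∈ [1,k] satisfies j_i = j ≤ n, j_{i+1} ≠ j+1 (with j_{k+1} := n+2), and m := s + k − i + P(j) ≥ 1. Then the coefficient of x_{m,j} in T is +1, and T − β_{m,j} = [j₁,...,j_{i−1}, j+1, j_{i+1},...,j_k]^A_s; in particular Ŝ_{m,j} T = [j₁,...,j_{i−1}, j+1, j_{i+1},...,j_k]^A_s. -/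

import Mathlib

/-! Combinatorics of an adapted sequence `ι` for a classical Lie algebra, and the
column-tableau linear forms of Kanakubo–Nakashima in re-indexed coordinates `x_{m,j}`
(the coordinate for the `m`-th occurrence of the index `j` in `ι`). -/

noncomputable section

/-- First position `m ≥ 1` with `ι m ∈ {i, j}`. -/
def firstBoth (ι : ℕ → ℕ) (i j : ℕ) : ℕ := sInf {m | 1 ≤ m ∧ (ι m = i ∨ ι m = j)}

/-- `p_{i,j} = 1` if `i` occurs before `j` in `ι`, and `0` otherwise. -/
def pOf (ι : ℕ → ℕ) (i j : ℕ) : ℕ := if ι (firstBoth ι i j) = i then 1 else 0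

/-- `ι⁽ⁱ⁾`, the first position of `ι` at which `i` occurs. -/
def firstOcc (ι : ℕ → ℕ) (i : ℕ) : ℕ := sInf {m | 1 ≤ m ∧ ι m = i}

/-- `P(k) = p_{2,1} + p_{3,2} + ⋯ + p_{k,k-1}` (so `P 0 = P 1 = 0`). -/
def Pof (ι : ℕ → ℕ) (k : ℕ) : ℕ := ∑ i ∈ Finset.Icc 2 k, pOf ι i (i - 1)

/-- The condition that every index `1,…,n` occurs infinitely often in `ι` and
consecutive entries of `ι` differ. -/
def SeqCond (n : ℕ) (ι : ℕ → ℕ) : Prop :=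
  (∀ m, 1 ≤ m → 1 ≤ ι m ∧ ι m ≤ n) ∧
  (∀ m, 1 ≤ m → ι m ≠ ι (m + 1)) ∧
  (∀ i, 1 ≤ i → i ≤ n → ∀ N : ℕ, ∃ m, N < m ∧ ι m = i)

/-- `ι` is adapted to the type `A_n` Cartan matrix: for adjacent indices `i, j`, any two
consecutive members of the subsequence of `ι` consisting of `i`'s and `j`'s differ. -/
def AdaptedA (n : ℕ) (ι : ℕ → ℕ) : Prop :=
  ∀ i j : ℕ, 1 ≤ i → i ≤ n → 1 ≤ j → j ≤ n → (i = j + 1 ∨ j = i + 1) →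
    ∀ m m' : ℕ, 1 ≤ m → m < m' → (ι m = i ∨ ι m = j) → (ι m' = i ∨ ι m' = j) →
      (∀ r, m < r → r < m' → ι r ≠ i ∧ ι r ≠ j) → ι m ≠ ι m'

/-- Linear forms on `ℚ^∞`, presented by their coefficients in the re-indexed
coordinates `x_{m,j}`. -/
abbrev LinF : Type := ℤ × ℕ → ℚ

/-- The coordinate functional `x_{m,j}` (zero when `m ≤ 0`, `j = 0` or `j > n`). -/
def XT (n : ℕ) (m : ℤ) (j : ℕ) : LinF :=
  fun q => if q = (m, j) ∧ 1 ≤ m ∧ 1 ≤ j ∧ j ≤ n then 1 else 0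

/-- The box `⌈j⌉^A_s = x_{s+P(j),j} − x_{s+P(j−1)+1,j−1}` of type `A_n`. -/
def boxA (n : ℕ) (ι : ℕ → ℕ) (j : ℕ) (s : ℤ) : LinF :=
  XT n (s + (Pof ι j : ℤ)) j - XT n (s + (Pof ι (j - 1) : ℤ) + 1) (j - 1)

/-- The column tableau `[j₁,…,j_k]^A_s = Σ_{i=1}^k ⌈j_i⌉^A_{s+k−i}` (here `j` is
`0`-indexed: `j ⟨0⟩ = j₁, …`). -/
def tabA (n : ℕ) (ι : ℕ → ℕ) {k : ℕ} (j : Fin k → ℕ) (s : ℤ) : LinF :=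
  ∑ i : Fin k, boxA n ι (j i) (s + (k : ℤ) - 1 - ((i : ℕ) : ℤ))

/-- The Nakashima–Zelevinsky form `β_{m,j}` in re-indexed coordinates, for `ι` adapted
to a type `A` Cartan matrix:
`β_{m,j} = x_{m,j} + x_{m+1,j} − x_{m+p_{j−1,j},j−1} − x_{m+p_{j+1,j},j+1}`. -/
def betaA (n : ℕ) (ι : ℕ → ℕ) (m : ℤ) (j : ℕ) : LinF :=
  XT n m j + XT n (m + 1) j - XT n (m + (pOf ι (j - 1) j : ℤ)) (j - 1)
    - XT n (m + (pOf ι (j + 1) j : ℤ)) (j + 1)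

/-- Affine-linear forms: a constant term together with a linear form. -/
abbrev AffF : Type := ℚ × LinF

/-- The form `β⁽⁻⁾_{m,j}` in re-indexed coordinates: `β_{m−1,j}` when `m ≥ 2`, and the
`λ`-dependent form with constant term `−⟨h_j, λ⟩` when `m = 1`. -/
def betaMA (n : ℕ) (ι : ℕ → ℕ) (lam : ℕ → ℤ) (m : ℤ) (j : ℕ) : AffF :=
  ((if m = 1 then -(lam j : ℚ) else 0), betaA n ι (m - 1) j)

/-- The operator `Ŝ_{m,j}` of the polyhedral realization of `B(λ)` in re-indexed
coordinates. -/
def ShatA (n : ℕ) (ι : ℕ → ℕ) (lam : ℕ → ℤ) (m : ℤ) (j : ℕ) (φ : AffF) : AffF :=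
  if 0 < φ.2 (m, j) then φ - φ.2 (m, j) • (((0 : ℚ), betaA n ι m j) : AffF)
  else φ - φ.2 (m, j) • betaMA n ι lam m j

end

/-!
Raising `j` to `j + 1` in one box subtracts a Nakashima–Zelevinsky form:
`box_{j+1}(s) = box_j(s) − β_{s+P(j),j}`, because `P(j+1) = P(j) + p_{j+1,j}` and
`p_{j−1,j} + p_{j,j−1} = 1`. So replacing `j_i = j` by `j + 1` turns `T` into `T − β_{m,j}`.
The coefficient of `x_{m,j}` in `T` is `1`: it comes from the positive term of `box_{j_i}`, and
the only box whose negative term could cancel it is the next one, which would have to be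
`box_{j+1}`; this is excluded by `j_{i+1} ≠ j + 1`. Hence `Ŝ_{m,j}` acts on `T` by subtracting
`β_{m,j}`.
-/

lemma pOf_add_pOf_swap {ι : ℕ → ℕ} {i j : ℕ} (hij : i ≠ j) (hocc : ∃ m, 1 ≤ m ∧ ι m = i) :
    pOf ι i j + pOf ι j i = 1 := by
  have hcomm : firstBoth ι j i = firstBoth ι i j := by
    simp only [firstBoth, or_comm]
  obtain ⟨-, hfirst⟩ : 1 ≤ firstBoth ι i j ∧
      (ι (firstBoth ι i j) = i ∨ ι (firstBoth ι i j) = j) :=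
    Nat.sInf_mem (s := {m | 1 ≤ m ∧ (ι m = i ∨ ι m = j)})
      (hocc.imp fun _ hm => ⟨hm.1, Or.inl hm.2⟩)
  unfold pOf
  rw [hcomm]
  rcases hfirst with h | h <;> simp [h, hij, hij.symm]

lemma Pof_succ (ι : ℕ → ℕ) {j : ℕ} (hj : 1 ≤ j) :
    Pof ι (j + 1) = Pof ι j + pOf ι (j + 1) j := by
  rw [Pof, Finset.sum_Icc_succ_top (by omega), Nat.add_sub_cancel, Pof]

lemma Pof_add_pOf_pred {ι : ℕ → ℕ} {j : ℕ} (hj : 2 ≤ j) (hocc : ∃ m, 1 ≤ m ∧ ι m = j) :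
    Pof ι j + pOf ι (j - 1) j = Pof ι (j - 1) + 1 := by
  have hP := Pof_succ ι (j := j - 1) (by omega)
  rw [Nat.sub_add_cancel (by omega : 1 ≤ j)] at hP
  have hp := pOf_add_pOf_swap (i := j) (j := j - 1) (by omega) hocc
  omega

lemma XT_zero (n : ℕ) (m : ℤ) : XT n m 0 = 0 := by
  funext q
  simp [XT]

lemma XT_apply_self {n : ℕ} {m : ℤ} {j : ℕ} (hm : 1 ≤ m) (hj : 1 ≤ j) (hjn : j ≤ n) :
    XT n m j (m, j) = 1 :=
  if_pos ⟨rfl, hm, hj, hjn⟩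

lemma XT_apply_of_ne {n : ℕ} {m : ℤ} {j : ℕ} {q : ℤ × ℕ} (hq : q ≠ (m, j)) : XT n m j q = 0 :=
  if_neg fun h => hq h.1

lemma boxA_succ {n : ℕ} {ι : ℕ → ℕ} {j : ℕ} (hj : 1 ≤ j) (hocc : ∃ m, 1 ≤ m ∧ ι m = j)
    (s : ℤ) : boxA n ι (j + 1) s = boxA n ι j s - betaA n ι (s + Pof ι j) j := by
  have hnext : s + Pof ι j + pOf ι (j + 1) j = s + Pof ι (j + 1) := by
    rw [Pof_succ ι hj]; push_cast; ring
  unfold boxA betaA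
  rw [Nat.add_sub_cancel, hnext]
  obtain rfl | hj2 := eq_or_lt_of_le hj
  · simp only [Nat.sub_self, XT_zero]
    abel
  · have hprev : s + Pof ι j + pOf ι (j - 1) j = s + Pof ι (j - 1) + 1 := by
      have := Pof_add_pOf_pred hj2 hocc
      omega
    rw [hprev]
    abel

lemma boxA_apply_self {n : ℕ} {ι : ℕ → ℕ} {j : ℕ} {s : ℤ} (hs : 1 ≤ s + Pof ι j) (hj : 1 ≤ j)
    (hjn : j ≤ n) : boxA n ι j s (s + Pof ι j, j) = 1 := by
  rw [boxA, Pi.sub_apply, XT_apply_self hs hj hjn,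
    XT_apply_of_ne (by simp only [ne_eq, Prod.mk.injEq]; omega), sub_zero]

lemma boxA_apply_of_ne {n : ℕ} {ι : ℕ → ℕ} {j j' : ℕ} {s m : ℤ} (hj : j ≠ j')
    (hsucc : j = j' + 1 → m ≠ s + Pof ι j' + 1) : boxA n ι j s (m, j') = 0 := by
  rw [boxA, Pi.sub_apply, XT_apply_of_ne (by simp [hj.symm]), XT_apply_of_ne, sub_zero]
  simp only [ne_eq, Prod.mk.injEq, not_and]
  intro hm hj'
  obtain rfl : j = j' + 1 := by omega
  exact hsucc rfl (by simpa using hm)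

lemma tabA_apply_of_raisable {n : ℕ} {ι : ℕ → ℕ} {k : ℕ} {j : Fin k → ℕ}
    (hinj : Function.Injective j) {s : ℤ} {a : Fin k} (h1 : 1 ≤ j a) (hn : j a ≤ n)
    (hnext : ∀ b : Fin k, (b : ℕ) = a + 1 → j b ≠ j a + 1)
    (hm : 1 ≤ s + k - 1 - a + Pof ι (j a)) :
    tabA n ι j s (s + k - 1 - a + Pof ι (j a), j a) = 1 := by
  rw [tabA, Finset.sum_apply, Finset.sum_eq_single a, boxA_apply_self hm h1 hn]
  · intro b _ hba
    refine boxA_apply_of_ne (hinj.ne hba) fun hb hm' => hnext b ?_ hb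
    omega
  · simp

lemma tabA_update {n : ℕ} {ι : ℕ → ℕ} {k : ℕ} (j : Fin k → ℕ) (s : ℤ) (a : Fin k) (v : ℕ) :
    tabA n ι (Function.update j a v) s =
      tabA n ι j s - boxA n ι (j a) (s + k - 1 - a) + boxA n ι v (s + k - 1 - a) := by
  unfold tabA
  rw [← Finset.sum_erase_add _ _ (Finset.mem_univ a),
    ← Finset.sum_erase_add _ _ (Finset.mem_univ a),
    Finset.sum_congr rfl fun i hi => by rw [Function.update_of_ne (Finset.ne_of_mem_erase hi)],
    Function.update_self]
  abel

lemma ShatA_of_apply_eq_one {n : ℕ} {ι : ℕ → ℕ} {lam : ℕ → ℤ} {m : ℤ} {j : ℕ} {φ : AffF}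
    (h : φ.2 (m, j) = 1) : ShatA n ι lam m j φ = (φ.1, φ.2 - betaA n ι m j) := by
  rw [ShatA, if_pos (h ▸ one_pos), h, one_smul]
  exact Prod.ext (sub_zero _) rfl

theorem ShatA_raises_box_general (n : ℕ) (ι : ℕ → ℕ) (lam : ℕ → ℤ)
    (hseq : SeqCond n ι)
    (k : ℕ) (j : Fin k → ℕ) (hmono : StrictMono j)
    (hrange : ∀ i, 1 ≤ j i ∧ j i ≤ n + 1) (s : ℤ)
    (a : Fin k) (jv : ℕ) (hja : j a = jv) (hjv : jv ≤ n)
    (hnext : ∀ a' : Fin k, (a' : ℕ) = (a : ℕ) + 1 → j a' ≠ jv + 1)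
    (m : ℤ) (hm : m = s + (k : ℤ) - 1 - ((a : ℕ) : ℤ) + (Pof ι jv : ℤ)) (hm1 : 1 ≤ m) :
    tabA n ι j s (m, jv) = 1 ∧
    tabA n ι j s - betaA n ι m jv = tabA n ι (Function.update j a (jv + 1)) s ∧
    ShatA n ι lam m jv (((0 : ℚ), tabA n ι j s) : AffF) =
      (((0 : ℚ), tabA n ι (Function.update j a (jv + 1)) s) : AffF) := by
  subst hja hm
  have hjv1 : 1 ≤ j a := (hrange a).1
  have hocc : ∃ p, 1 ≤ p ∧ ι p = j a := hseq.2.2 (j a) hjv1 hjv 0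
  have hcoeff := tabA_apply_of_raisable hmono.injective hjv1 hjv hnext hm1
  have hraise : tabA n ι j s - betaA n ι (s + k - 1 - a + Pof ι (j a)) (j a) =
      tabA n ι (Function.update j a (j a + 1)) s := by
    rw [tabA_update, boxA_succ hjv1 hocc]
    abel
  exact ⟨hcoeff, hraise, by rw [ShatA_of_apply_eq_one hcoeff, hraise]⟩

/-- Type `A` single-box raising.  For a column `j₁ < ⋯ < j_k` in `{1,…,n+1}` (`0`-indexed
`a ↦ j_{a+1}`), `T = [j₁,…,j_k]^A_s`, and `a` with `j_{a+1} = jv ≤ n`,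
`j_{a+2} ≠ jv + 1` (with the convention `j_{k+1} = n+2`), and
`m = s + k − (a+1) + P(jv) ≥ 1`:
the coefficient of `x_{m,jv}` in `T` is `+1`, `T − β_{m,jv}` is the tableau with
`j_{a+1}` replaced by `jv + 1`, and in particular `Ŝ_{m,jv} T` is that tableau. -/
theorem ShatA_raises_box (n : ℕ) (ι : ℕ → ℕ) (lam : ℕ → ℤ)
    (hseq : SeqCond n ι) (had : AdaptedA n ι)
    (k : ℕ) (hk : 1 ≤ k) (j : Fin k → ℕ) (hmono : StrictMono j)
    (hrange : ∀ i, 1 ≤ j i ∧ j i ≤ n + 1) (s : ℤ)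
    (a : Fin k) (jv : ℕ) (hja : j a = jv) (hjv : jv ≤ n)
    (hnext : ∀ a' : Fin k, (a' : ℕ) = (a : ℕ) + 1 → j a' ≠ jv + 1)
    (m : ℤ) (hm : m = s + (k : ℤ) - 1 - ((a : ℕ) : ℤ) + (Pof ι jv : ℤ)) (hm1 : 1 ≤ m) :
    tabA n ι j s (m, jv) = 1 ∧
    tabA n ι j s - betaA n ι m jv = tabA n ι (Function.update j a (jv + 1)) s ∧
    ShatA n ι lam m jv (((0 : ℚ), tabA n ι j s) : AffF) =
      (((0 : ℚ), tabA n ι (Function.update j a (jv + 1)) s) : AffF) :=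
  ShatA_raises_box_general n ι lam hseq k j hmono hrange s a jv hja hjv hnext m hm hm1
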